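/- arXiv:2601.06321 — 6 statements merged into one kernel-verified Lean document; each statement's English description precedes it below -/
import Mathlib

section
/- For every x ∈ S_Ω, every constraint index j ∈ {1,…,m}, and every fidelity index i ∈ {1,…,L} with i ≥ a(j), one has c(x,j,i) ≤ 0. In particular, when the fidelity controller evaluates a feasible sample point with an assignment vector feasible for the assignment subproblem, no constraint check fails at any fidelity at or above the assigned one, so the evaluation is never interrupted and feasibility is conserved between the wrapped problem and the truth. -/
open scoped Classical

/-- If the assignment vector is feasible for the assignment subproblem
(each constraint assigned at or above its minimal fully-representative fidelity on the
feasible sample points), then at every feasible sample point every constraint is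
satisfied at every fidelity at or above its assigned one: the fidelity controller is
never interrupted and feasibility is conserved. -/
theorem feasibility_conserved {X : Type*} (S : Finset X)
    (L m : ℕ) (hL : 1 ≤ L) (hm : 1 ≤ m)
    (c : X → Fin m → Fin L → ℝ)
    (truth : Fin L) (htruth : (truth : ℕ) = L - 1)
    (SΩ : Finset X)
    (hSΩ : SΩ = S.filter (fun x => ∀ j : Fin m, c x j truth ≤ 0))
    (hne : SΩ.Nonempty)
    (r : Fin L → Fin m → ℝ)
    (hr : ∀ i j, r i j =
      ((SΩ.filter (fun x => ∀ ℓ : Fin L, i ≤ ℓ →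
        (0 < c x j ℓ ↔ 0 < c x j truth))).card : ℝ) / (SΩ.card : ℝ))
    (i₀ : Fin m → Fin L)
    (hi₀ : ∀ j, IsLeast {i : Fin L | r i j = 1} (i₀ j))
    (a : Fin m → Fin L)
    (ha : ∀ j, i₀ j ≤ a j) :
    ∀ x ∈ SΩ, ∀ (j : Fin m) (i : Fin L), a j ≤ i → c x j i ≤ 0 := by
  intro x hx j i hai
  have hr1 : r (i₀ j) j = 1 := (hi₀ j).1
  rw [hr (i₀ j) j] at hr1
  have hcard : SΩ.card ≠ 0 := Finset.card_ne_zero_of_mem hx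
  have hcardR : (SΩ.card : ℝ) ≠ 0 := Nat.cast_ne_zero.mpr hcard
  have hceq : ((SΩ.filter (fun x => ∀ ℓ : Fin L, i₀ j ≤ ℓ →
      (0 < c x j ℓ ↔ 0 < c x j truth))).card : ℝ) = (SΩ.card : ℝ) := by
    field_simp at hr1
    exact_mod_cast hr1
  have hceq' : (SΩ.filter (fun x => ∀ ℓ : Fin L, i₀ j ≤ ℓ →
      (0 < c x j ℓ ↔ 0 < c x j truth))).card = SΩ.card := by exact_mod_cast hceq
  have hfull := Finset.filter_card_eq hceq' x hx
  have hrep : 0 < c x j i ↔ 0 < c x j truth := hfull i (le_trans (ha j) hai)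
  have hfeas : c x j truth ≤ 0 := by
    rw [hSΩ] at hx
    exact (Finset.mem_filter.mp hx).2 j
  by_contra h
  exact absurd (hrep.mp (lt_of_not_ge h)) (not_lt.mpr hfeas)
end

section
/- Assume: (i) for every x ∈ S, every j ∈ {1,…,m} and every i ≥ a(j), one has c(x,j,i) > 0 ↔ c(x,j,a(j)) > 0 (the assigned fidelity of each constraint is representative at every sample point); and (ii) with respect to the uniform probability measure on S, the m events E_j = {x ∈ S : c(x,j,a(j)) ≤ 0}, j ∈ {1,…,m}, are mutually independent. Then the expected cost of an evaluation by the fidelity controller at a uniformly random point of S equals the objective of the assignment subproblem: (1/|S|) · Σ_{x ∈ S} cost(x) = Σ_{i ∈ Φ} λ(i) · ∏_{j : a(j) < i} p(a(j), j). -/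
open scoped Classical

/-- If each constraint's assigned fidelity is representative at every
sample point and the satisfaction events at the assigned fidelities are mutually
independent under the uniform measure on the sample set, then the expected cost of a
fidelity-controller evaluation at a uniformly random sample point equals the objective
of the assignment subproblem. -/
theorem expected_cost_eq_objective {X : Type*} (S : Finset X) (hS : S.Nonempty)
    (L m : ℕ) (hL : 1 ≤ L) (hm : 1 ≤ m)
    (c : X → Fin m → Fin L → ℝ)
    (lam : Fin L → ℝ) (hlam : ∀ i, 0 ≤ lam i)
    (a : Fin m → Fin L)
    (Φ : Finset (Fin L)) (hΦ : Φ = Finset.image a Finset.univ)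
    (p : Fin L → Fin m → ℝ)
    (hp : ∀ i j, p i j =
      ((S.filter (fun x => c x j i ≤ 0)).card : ℝ) / (S.card : ℝ))
    (hrep : ∀ x ∈ S, ∀ (j : Fin m) (i : Fin L), a j ≤ i →
      (0 < c x j i ↔ 0 < c x j (a j)))
    (hindep : ∀ T : Finset (Fin m),
      ((S.filter (fun x => ∀ j ∈ T, c x j (a j) ≤ 0)).card : ℝ) / (S.card : ℝ)
        = ∏ j ∈ T, p (a j) j)
    (cost : X → ℝ)
    (hcost : ∀ x, cost x = ∑ i ∈ Φ, lam i *
      (if ∀ ℓ ∈ Φ, ℓ < i → ∀ j : Fin m, a j ≤ ℓ → c x j ℓ ≤ 0 then (1 : ℝ) else 0)) :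
    (1 / (S.card : ℝ)) * ∑ x ∈ S, cost x
      = ∑ i ∈ Φ, lam i *
          ∏ j ∈ Finset.univ.filter (fun j : Fin m => a j < i), p (a j) j := by
  have hiff : ∀ i : Fin L, ∀ x ∈ S,
      ((∀ ℓ ∈ Φ, ℓ < i → ∀ j : Fin m, a j ≤ ℓ → c x j ℓ ≤ 0) ↔
       (∀ j ∈ Finset.univ.filter (fun j : Fin m => a j < i), c x j (a j) ≤ 0)) := by
    intro i x hx
    constructor
    · intro h j hj
      simp only [Finset.mem_filter, Finset.mem_univ, true_and] at hj
      exact h (a j) (by simp [hΦ]) hj j le_rfl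
    · intro h ℓ hℓ hℓi j hjℓ
      have hji : a j < i := lt_of_le_of_lt hjℓ hℓi
      have hle := h j (by simp [hji])
      by_contra hpos
      push_neg at hpos
      exact absurd ((hrep x hx j ℓ hjℓ).mp hpos) (not_lt.mpr hle)
  simp only [hcost]
  rw [Finset.sum_comm, Finset.mul_sum]
  refine Finset.sum_congr rfl fun i hi => ?_
  rw [← Finset.mul_sum]
  have hsum : (∑ x ∈ S, (if ∀ ℓ ∈ Φ, ℓ < i → ∀ j : Fin m, a j ≤ ℓ → c x j ℓ ≤ 0 then (1:ℝ) else 0))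
      = ((S.filter (fun x => ∀ j ∈ Finset.univ.filter (fun j : Fin m => a j < i), c x j (a j) ≤ 0)).card : ℝ) := by
    rw [Finset.sum_boole]
    congr 1
    exact congrArg Finset.card (Finset.filter_congr fun x hx => hiff i x hx)
  have hprod := hindep (Finset.univ.filter (fun j : Fin m => a j < i))
  rw [hsum, ← hprod]
  ring
end

section
/- Assume λ is strictly increasing with λ(i) > 0 for all i, that 0 ≤ p(i,j) ≤ 1 for all i, j, and that p(i,j) = p(i₀(j), j) whenever i ≥ i₀(j). Then there exists a feasible assignment a* that minimizes f_Q over all feasible assignments and such that a*(j) belongs to the range i₀({1,…,m}) for every j ∈ {1,…,m}; i.e., the assignment subproblem with the IDS objective admits an optimal solution in which every constraint is assigned to a fidelity index lying in the range of i₀. -/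
set_option maxHeartbeats 1000000 in
/-- Auxiliary rounding lemma: any feasible assignment can be rounded down to one whose
values lie in the range of `i₀`, without increasing the objective. -/
lemma round_aux {L m : ℕ} (lam : Fin L → ℝ) (hmono : StrictMono lam)
    (hpos : ∀ i, 0 < lam i)
    (q : Fin m → ℝ) (hq0 : ∀ j, 0 ≤ q j) (hq1 : ∀ j, q j ≤ 1)
    (i₀ : Fin m → Fin L) (a : Fin m → Fin L) (hfeas : ∀ j, i₀ j ≤ a j) :
    ∃ a' : Fin m → Fin L, (∀ j, i₀ j ≤ a' j) ∧ (∀ j, a' j ∈ Set.range i₀) ∧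
      (∑ i ∈ Finset.image a' Finset.univ,
        lam i * ∏ j ∈ Finset.univ.filter (fun j => a' j < i), q j)
      ≤ ∑ i ∈ Finset.image a Finset.univ,
        lam i * ∏ j ∈ Finset.univ.filter (fun j => a j < i), q j := by
  classical
  set R : Finset (Fin L) := Finset.univ.image i₀ with hR
  have hspec : ∀ j : Fin m, ∃ y : Fin L,
      y ∈ R ∧ y ≤ a j ∧ ∀ x ∈ R, x ≤ a j → x ≤ y := by
    intro j
    have hSne : (R.filter (fun x => x ≤ a j)).Nonempty := ⟨i₀ j, by simp [hR, hfeas j]⟩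
    refine ⟨(R.filter (fun x => x ≤ a j)).max' hSne, ?_, ?_, ?_⟩
    · exact (Finset.mem_filter.mp (Finset.max'_mem _ hSne)).1
    · exact (Finset.mem_filter.mp (Finset.max'_mem _ hSne)).2
    · intro x hx hxa
      apply Finset.le_max'
      exact Finset.mem_filter.mpr ⟨hx, hxa⟩
  choose a' ha'R ha'le hamax using hspec
  have ha'ge : ∀ j, i₀ j ≤ a' j := fun j =>
    hamax j (i₀ j) (Finset.mem_image.mpr ⟨j, Finset.mem_univ j, rfl⟩) (hfeas j)
  have hkey : ∀ j j', a j = a j' → a' j = a' j' := by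
    intro j j' h
    exact le_antisymm (hamax j' (a' j) (ha'R j) (h ▸ ha'le j))
      (hamax j (a' j') (ha'R j') (h ▸ ha'le j'))
  refine ⟨a', ha'ge, fun j => by
    obtain ⟨k, _, hki⟩ := Finset.mem_image.mp (ha'R j)
    exact ⟨k, hki⟩, ?_⟩
  set T : Finset (Fin L) := Finset.image a Finset.univ with hT
  set T' : Finset (Fin L) := Finset.image a' Finset.univ with hT'
  set F : Fin L → Finset (Fin L) := fun i' => T.filter (fun i => ∃ j, a j = i ∧ a' j = i')
    with hF
  have hFne : ∀ i' ∈ T', (F i').Nonempty := by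
    intro i' hi'
    obtain ⟨j, _, hj⟩ := Finset.mem_image.mp hi'
    exact ⟨a j, Finset.mem_filter.mpr ⟨Finset.mem_image.mpr ⟨j, Finset.mem_univ j, rfl⟩,
      ⟨j, rfl, hj⟩⟩⟩
  set g : Fin L → Fin L := fun i' => if h : (F i').Nonempty then (F i').min' h else i'
    with hg
  have hgdef : ∀ i' (h : i' ∈ T'), g i' = (F i').min' (hFne i' h) := by
    intro i' h
    rw [hg]
    exact dif_pos (hFne i' h)
  have hgF : ∀ i' ∈ T', g i' ∈ F i' := by
    intro i' hi'
    rw [hgdef i' hi']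
    exact Finset.min'_mem _ _
  have hgT : ∀ i' ∈ T', g i' ∈ T := fun i' hi' => (Finset.mem_filter.mp (hgF i' hi')).1
  have hgwit : ∀ i' ∈ T', ∃ j, a j = g i' ∧ a' j = i' := fun i' hi' =>
    (Finset.mem_filter.mp (hgF i' hi')).2
  have hgle : ∀ i' ∈ T', i' ≤ g i' := by
    intro i' hi'
    obtain ⟨j, hj1, hj2⟩ := hgwit i' hi'
    rw [← hj1, ← hj2]
    exact ha'le j
  have hginj : ∀ i₁ ∈ T', ∀ i₂ ∈ T', g i₁ = g i₂ → i₁ = i₂ := by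
    intro i₁ h₁ i₂ h₂ heq
    obtain ⟨j₁, hj₁, hj₁'⟩ := hgwit i₁ h₁
    obtain ⟨j₂, hj₂, hj₂'⟩ := hgwit i₂ h₂
    rw [← hj₁', ← hj₂']
    exact hkey j₁ j₂ (by rw [hj₁, hj₂, heq])
  have hincl : ∀ i' ∈ T', ∀ j, a j < g i' → a' j < i' := by
    intro i' hi' j hj
    by_contra hcon
    push_neg at hcon
    obtain ⟨jw, hw1, hw2⟩ := hgwit i' hi'
    have h1 : a' j ≤ a' jw := hamax jw (a' j) (ha'R j)
      (le_trans (ha'le j) (le_of_lt (hw1 ▸ hj)))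
    have h2 : a' j = i' := le_antisymm (hw2 ▸ h1) hcon
    have h3 : a j ∈ F i' := Finset.mem_filter.mpr
      ⟨Finset.mem_image.mpr ⟨j, Finset.mem_univ j, rfl⟩, ⟨j, rfl, h2⟩⟩
    have h4 : g i' ≤ a j := by
      rw [hgdef i' hi']
      exact Finset.min'_le _ _ h3
    exact absurd hj (not_lt.mpr h4)
  have hterm : ∀ i' ∈ T',
      lam i' * ∏ j ∈ Finset.univ.filter (fun j => a' j < i'), q j
      ≤ lam (g i') * ∏ j ∈ Finset.univ.filter (fun j => a j < g i'), q j := by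
    intro i' hi'
    have hsub : Finset.univ.filter (fun j => a j < g i') ⊆
        Finset.univ.filter (fun j => a' j < i') := by
      intro j hjmem
      simp only [Finset.mem_filter, Finset.mem_univ, true_and] at hjmem ⊢
      exact hincl i' hi' j hjmem
    have hprod : ∏ j ∈ Finset.univ.filter (fun j => a' j < i'), q j
        ≤ ∏ j ∈ Finset.univ.filter (fun j => a j < g i'), q j := by
      rw [← Finset.prod_sdiff hsub]
      calc (∏ j ∈ (Finset.univ.filter (fun j => a' j < i')) \
              (Finset.univ.filter (fun j => a j < g i')), q j) *
            ∏ j ∈ Finset.univ.filter (fun j => a j < g i'), q j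
          ≤ 1 * ∏ j ∈ Finset.univ.filter (fun j => a j < g i'), q j := by
            apply mul_le_mul_of_nonneg_right
            · exact Finset.prod_le_one (fun j _ => hq0 j) (fun j _ => hq1 j)
            · exact Finset.prod_nonneg (fun j _ => hq0 j)
        _ = _ := one_mul _
    exact mul_le_mul (hmono.monotone (hgle i' hi')) hprod
      (Finset.prod_nonneg (fun j _ => hq0 j)) (hpos _).le
  calc (∑ i ∈ T', lam i * ∏ j ∈ Finset.univ.filter (fun j => a' j < i), q j)
      ≤ ∑ i ∈ T', lam (g i) * ∏ j ∈ Finset.univ.filter (fun j => a j < g i), q j :=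
        Finset.sum_le_sum hterm
    _ = ∑ i ∈ T'.image g, lam i * ∏ j ∈ Finset.univ.filter (fun j => a j < i), q j :=
        (Finset.sum_image (f := fun i => lam i *
          ∏ j ∈ Finset.univ.filter (fun j => a j < i), q j) hginj).symm
    _ ≤ ∑ i ∈ T, lam i * ∏ j ∈ Finset.univ.filter (fun j => a j < i), q j := by
        apply Finset.sum_le_sum_of_subset_of_nonneg
        · intro i hi
          obtain ⟨i', hi', rfl⟩ := Finset.mem_image.mp hi
          exact hgT i' hi'
        · intro i _ _
          exact mul_nonneg (hpos i).le (Finset.prod_nonneg (fun j _ => hq0 j))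

/-- The assignment subproblem with the IDS objective admits an optimal
feasible solution in which every constraint is assigned to a fidelity index lying in
the range of the minimal representative fidelity map `i₀`. -/
theorem exists_optimal_assignment_in_range (L m : ℕ) (hL : 1 ≤ L) (hm : 1 ≤ m)
    (lam : Fin L → ℝ) (hmono : StrictMono lam) (hpos : ∀ i, 0 < lam i)
    (p : Fin L → Fin m → ℝ) (hp0 : ∀ i j, 0 ≤ p i j) (hp1 : ∀ i j, p i j ≤ 1)
    (i₀ : Fin m → Fin L)
    (hstab : ∀ (i : Fin L) (j : Fin m), i₀ j ≤ i → p i j = p (i₀ j) j)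
    (fQ : (Fin m → Fin L) → ℝ)
    (hfQ : ∀ a, fQ a = ∑ i ∈ Finset.image a Finset.univ,
      lam i * ∏ j ∈ Finset.univ.filter (fun j => a j < i), p (a j) j) :
    ∃ astar : Fin m → Fin L,
      (∀ j, i₀ j ≤ astar j) ∧
      (∀ a : Fin m → Fin L, (∀ j, i₀ j ≤ a j) → fQ astar ≤ fQ a) ∧
      (∀ j, astar j ∈ Set.range i₀) := by
  classical
  set q : Fin m → ℝ := fun j => p (i₀ j) j with hq
  have hq0 : ∀ j, 0 ≤ q j := fun j => hp0 _ _
  have hq1 : ∀ j, q j ≤ 1 := fun j => hp1 _ _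
  have hFeq : ∀ a : Fin m → Fin L, (∀ j, i₀ j ≤ a j) →
      fQ a = ∑ i ∈ Finset.image a Finset.univ,
        lam i * ∏ j ∈ Finset.univ.filter (fun j => a j < i), q j := by
    intro a ha
    rw [hfQ]
    refine Finset.sum_congr rfl fun i _ => ?_
    congr 1
    exact Finset.prod_congr rfl fun j _ => hstab (a j) j (ha j)
  obtain ⟨a0, ha0mem, ha0min⟩ := Finset.exists_min_image
    (Finset.univ.filter (fun a : Fin m → Fin L => ∀ j, i₀ j ≤ a j)) fQ
    ⟨i₀, by simp⟩
  have ha0feas : ∀ j, i₀ j ≤ a0 j := (Finset.mem_filter.mp ha0mem).2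
  obtain ⟨a', ha'feas, ha'range, ha'le⟩ :=
    round_aux lam hmono hpos q hq0 hq1 i₀ a0 ha0feas
  refine ⟨a', ha'feas, fun a ha => ?_, ha'range⟩
  have h1 : fQ a' ≤ fQ a0 := by
    rw [hFeq a' ha'feas, hFeq a0 ha0feas]
    exact ha'le
  exact le_trans h1 (ha0min a (Finset.mem_filter.mpr ⟨Finset.mem_univ a, ha⟩))
end

section
/- Assume λ(i) > 0 for all i, that 0 ≤ p(i,j) ≤ 1 for all i, j, and that p(i,j) = p(i₀(j), j) whenever i ≥ i₀(j). Then the assignment a* defined by a*(j) = i₀(j) for all j is optimal for the DIDS objective: for every feasible assignment a (i.e., a(j) ≥ i₀(j) for all j), one has f(a*) ≤ f(a). -/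
/-- For the DIDS objective, the assignment `a*(j) = i₀(j)` (each
constraint assigned to its minimal representative fidelity index) is optimal among all
feasible assignments. -/
theorem dids_assignment_optimal (L m : ℕ) (hL : 1 ≤ L) (hm : 1 ≤ m)
    (lam : Fin L → ℝ) (hpos : ∀ i, 0 < lam i)
    (p : Fin L → Fin m → ℝ) (hp0 : ∀ i j, 0 ≤ p i j) (hp1 : ∀ i j, p i j ≤ 1)
    (i₀ : Fin m → Fin L)
    (hstab : ∀ (i : Fin L) (j : Fin m), i₀ j ≤ i → p i j = p (i₀ j) j)
    (f : (Fin m → Fin L) → ℝ)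
    (hf : ∀ a, f a = ∑ i : Fin L,
      lam i * ∏ j ∈ Finset.univ.filter (fun j => a j < i), p (a j) j) :
    ∀ a : Fin m → Fin L, (∀ j, i₀ j ≤ a j) → f i₀ ≤ f a := by
  intro a ha
  rw [hf, hf]
  apply Finset.sum_le_sum
  intro i _
  apply mul_le_mul_of_nonneg_left _ (hpos i).le
  have hsub : (Finset.univ.filter (fun j => a j < i)) ⊆
      (Finset.univ.filter (fun j => i₀ j < i)) := by
    intro j hj
    simp only [Finset.mem_filter, Finset.mem_univ, true_and] at hj ⊢
    exact lt_of_le_of_lt (ha j) hj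
  have h1 : ∏ j ∈ Finset.univ.filter (fun j => a j < i), p (a j) j
      = ∏ j ∈ Finset.univ.filter (fun j => a j < i), p (i₀ j) j :=
    Finset.prod_congr rfl (fun j _ => hstab (a j) j (ha j))
  rw [h1]
  calc ∏ j ∈ Finset.univ.filter (fun j => i₀ j < i), p (i₀ j) j
      = (∏ j ∈ (Finset.univ.filter (fun j => i₀ j < i)) \
          (Finset.univ.filter (fun j => a j < i)), p (i₀ j) j) *
        ∏ j ∈ Finset.univ.filter (fun j => a j < i), p (i₀ j) j :=
        (Finset.prod_sdiff hsub).symm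
    _ ≤ 1 * ∏ j ∈ Finset.univ.filter (fun j => a j < i), p (i₀ j) j := by
        apply mul_le_mul_of_nonneg_right
        · exact Finset.prod_le_one (fun j _ => hp0 _ _) (fun j _ => hp1 _ _)
        · exact Finset.prod_nonneg (fun j _ => hp0 _ _)
    _ = _ := one_mul _
end

section
/- Assume λ is strictly increasing with λ(i) > 0 for all i, that 0 ≤ p(i,j) ≤ 1 and p(i₀(j), j) > 0 for all i, j, and that p(i,j) = p(i₀(j), j) whenever i ≥ i₀(j). Let a be a feasible assignment such that some constraint is assigned to a fidelity index î ∉ i₀({1,…,m}). Define â by â(j) = î − 1 if a(j) = î and â(j) = a(j) otherwise. Then â is feasible and f_Q(â) < f_Q(a); in particular, a is not an optimal solution of the assignment subproblem. -/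
/-- (IDS exchange step) If a feasible assignment `a` assigns some
constraint to a fidelity index `î` outside the range of `i₀`, then moving every
constraint assigned to `î` down to `î − 1` yields a feasible assignment with strictly
smaller IDS objective value, so `a` is not optimal. -/
theorem ids_exchange_strict_decrease (L m : ℕ) (hL : 1 ≤ L) (hm : 1 ≤ m)
    (lam : Fin L → ℝ) (hmono : StrictMono lam) (hpos : ∀ i, 0 < lam i)
    (p : Fin L → Fin m → ℝ) (hp0 : ∀ i j, 0 ≤ p i j) (hp1 : ∀ i j, p i j ≤ 1)
    (i₀ : Fin m → Fin L)
    (hppos : ∀ j, 0 < p (i₀ j) j)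
    (hstab : ∀ (i : Fin L) (j : Fin m), i₀ j ≤ i → p i j = p (i₀ j) j)
    (fQ : (Fin m → Fin L) → ℝ)
    (hfQ : ∀ a, fQ a = ∑ i ∈ Finset.image a Finset.univ,
      lam i * ∏ j ∈ Finset.univ.filter (fun j => a j < i), p (a j) j)
    (a : Fin m → Fin L) (ha : ∀ j, i₀ j ≤ a j)
    (ihat : Fin L) (hnotin : ihat ∉ Set.range i₀)
    (hassigned : ∃ j, a j = ihat)
    (ipred : Fin L) (hipred : (ipred : ℕ) + 1 = (ihat : ℕ))
    (ahat : Fin m → Fin L)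
    (hahat : ∀ j, ahat j = if a j = ihat then ipred else a j) :
    (∀ j, i₀ j ≤ ahat j) ∧ fQ ahat < fQ a := by
  have hpredne : ipred ≠ ihat := by
    intro h; rw [h] at hipred; omega
  have hfeas_pred : ∀ j, a j = ihat → i₀ j ≤ ipred := by
    intro j hj
    have h1 : (i₀ j : ℕ) ≤ (ihat : ℕ) := by
      have := ha j; rw [hj] at this; exact this
    have h2 : (i₀ j : ℕ) ≠ (ihat : ℕ) := by
      intro h; exact hnotin ⟨j, Fin.ext h⟩
    exact Fin.le_def.mpr (by omega)
  have hfeas : ∀ j, i₀ j ≤ ahat j := by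
    intro j
    rw [hahat j]
    by_cases h : a j = ihat
    · simpa [h] using hfeas_pred j h
    · simpa [h] using ha j
  refine ⟨hfeas, ?_⟩
  have hpa : ∀ j, p (a j) j = p (i₀ j) j := fun j => hstab _ _ (ha j)
  have hpahat : ∀ j, p (ahat j) j = p (a j) j := by
    intro j
    rw [hahat j]
    by_cases h : a j = ihat
    · rw [if_pos h, hstab ipred j (hfeas_pred j h), hpa j]
    · simp [h]
  have hfilter : ∀ i : Fin L, i ≠ ihat →
      (Finset.univ.filter (fun j => ahat j < i)) =
      Finset.univ.filter (fun j => a j < i) := by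
    intro i hi
    apply Finset.filter_congr
    intro j _
    rw [hahat j]
    by_cases h : a j = ihat
    · have hvi : (i : ℕ) ≠ (ihat : ℕ) := fun hh => hi (Fin.ext hh)
      rw [if_pos h, h]
      simp only [Fin.lt_def]
      omega
    · simp [h]
  set S := Finset.image a Finset.univ with hS
  have hihat_mem : ihat ∈ S := by
    obtain ⟨j, hj⟩ := hassigned
    exact Finset.mem_image.mpr ⟨j, Finset.mem_univ j, hj⟩
  have himage : Finset.image ahat Finset.univ = insert ipred (S.erase ihat) := by
    ext i
    simp only [Finset.mem_image, Finset.mem_univ, true_and, Finset.mem_insert,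
      Finset.mem_erase, hS]
    constructor
    · rintro ⟨j, hj⟩
      rw [hahat j] at hj
      by_cases h : a j = ihat
      · left; rw [if_pos h] at hj; exact hj.symm
      · right
        rw [if_neg h] at hj
        exact ⟨hj ▸ h, j, hj⟩
    · rintro (rfl | ⟨hne, j, hj⟩)
      · obtain ⟨j, hj⟩ := hassigned
        exact ⟨j, by rw [hahat j, if_pos hj]⟩
      · exact ⟨j, by rw [hahat j, if_neg (hj ▸ hne : a j ≠ ihat)]; exact hj⟩
  set Q : Fin L → ℝ := fun i => ∏ j ∈ Finset.univ.filter (fun j => a j < i), p (a j) j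
    with hQdef
  have hQpos : ∀ i : Fin L, 0 < Q i := by
    intro i
    refine Finset.prod_pos fun j _ => ?_
    rw [hpa j]; exact hppos j
  have hterm : ∀ i : Fin L, i ≠ ihat →
      (lam i * ∏ j ∈ Finset.univ.filter (fun j => ahat j < i), p (ahat j) j)
        = lam i * Q i := by
    intro i hi
    rw [hfilter i hi]
    exact congrArg _ (Finset.prod_congr rfl fun j _ => hpahat j)
  have hfahat : fQ ahat = ∑ i ∈ insert ipred (S.erase ihat), lam i * Q i := by
    rw [hfQ, himage]
    refine Finset.sum_congr rfl fun i hi => ?_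
    have hine : i ≠ ihat := by
      rcases Finset.mem_insert.mp hi with h | h
      · exact h ▸ hpredne
      · exact (Finset.mem_erase.mp h).1
    exact hterm i hine
  have hfa : fQ a = (∑ i ∈ S.erase ihat, lam i * Q i) + lam ihat * Q ihat := by
    rw [hfQ]
    exact (Finset.sum_erase_add S _ hihat_mem).symm
  by_cases hip : ipred ∈ S
  · have : insert ipred (S.erase ihat) = S.erase ihat :=
      Finset.insert_eq_self.mpr (Finset.mem_erase.mpr ⟨hpredne, hip⟩)
    rw [hfahat, this, hfa]
    have := mul_pos (hpos ihat) (hQpos ihat)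
    linarith
  · have hnotmem : ipred ∉ S.erase ihat := fun h => hip (Finset.mem_erase.mp h).2
    rw [hfahat, Finset.sum_insert hnotmem, hfa]
    have hQeq : Q ipred = Q ihat := by
      apply Finset.prod_congr _ fun j _ => rfl
      apply Finset.filter_congr
      intro j _
      have hne : a j ≠ ipred := by
        intro h
        exact hip (Finset.mem_image.mpr ⟨j, Finset.mem_univ j, h⟩)
      have hvne : (a j : ℕ) ≠ (ipred : ℕ) := fun hh => hne (Fin.ext hh)
      simp only [Fin.lt_def]
      omega
    have hlam : lam ipred < lam ihat := hmono (Fin.lt_def.mpr (by omega))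
    have : lam ipred * Q ipred < lam ihat * Q ihat := by
      rw [hQeq]
      exact mul_lt_mul_of_pos_right hlam (hQpos ihat)
    linarith
end

section
/- Assume λ(i) > 0 for all i, that 0 ≤ p(i,j) ≤ 1 and p(i₀(j), j) > 0 for all i, j, and that p(i,j) = p(i₀(j), j) whenever i ≥ i₀(j). Let a be a feasible assignment and suppose there is a constraint index ĵ with p(i₀(ĵ), ĵ) < 1 and a(ĵ) > i₀(ĵ). Define â by â(ĵ) = i₀(ĵ) and â(j) = a(j) for j ≠ ĵ. Then â is feasible and f(â) < f(a); in particular, a is not an optimal solution. -/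
/-- (DIDS exchange step) If a feasible assignment `a` assigns some
constraint `ĵ` with `p(i₀(ĵ), ĵ) < 1` strictly above its minimal representative
fidelity, then reassigning `ĵ` to `i₀(ĵ)` yields a feasible assignment with strictly
smaller DIDS objective value, so `a` is not optimal. -/
theorem dids_exchange_strict_decrease (L m : ℕ) (hL : 1 ≤ L) (hm : 1 ≤ m)
    (lam : Fin L → ℝ) (hpos : ∀ i, 0 < lam i)
    (p : Fin L → Fin m → ℝ) (hp0 : ∀ i j, 0 ≤ p i j) (hp1 : ∀ i j, p i j ≤ 1)
    (i₀ : Fin m → Fin L)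
    (hppos : ∀ j, 0 < p (i₀ j) j)
    (hstab : ∀ (i : Fin L) (j : Fin m), i₀ j ≤ i → p i j = p (i₀ j) j)
    (f : (Fin m → Fin L) → ℝ)
    (hf : ∀ a, f a = ∑ i : Fin L,
      lam i * ∏ j ∈ Finset.univ.filter (fun j => a j < i), p (a j) j)
    (a : Fin m → Fin L) (ha : ∀ j, i₀ j ≤ a j)
    (jhat : Fin m) (hplt : p (i₀ jhat) jhat < 1) (hgt : i₀ jhat < a jhat)
    (ahat : Fin m → Fin L)
    (hahat : ahat = Function.update a jhat (i₀ jhat)) :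
    (∀ j, i₀ j ≤ ahat j) ∧ f ahat < f a := by
  subst hahat
  have hfeas : ∀ j, i₀ j ≤ Function.update a jhat (i₀ jhat) j := by
    intro j
    rcases eq_or_ne j jhat with rfl | h
    · simp
    · rw [Function.update_of_ne h]; exact ha j
  refine ⟨hfeas, ?_⟩
  rw [hf, hf]
  have hg : ∀ j, p (Function.update a jhat (i₀ jhat) j) j = p (a j) j := by
    intro j
    rcases eq_or_ne j jhat with rfl | h
    · rw [Function.update_self, hstab (a j) j (le_of_lt hgt)]
    · rw [Function.update_of_ne h]
  have hgpos : ∀ j, 0 < p (a j) j := by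
    intro j; rw [hstab (a j) j (ha j)]; exact hppos j
  have hset : ∀ i : Fin L,
      Finset.univ.filter (fun j => Function.update a jhat (i₀ jhat) j < i)
        = if i₀ jhat < i ∧ ¬ a jhat < i
          then insert jhat (Finset.univ.filter (fun j => a j < i))
          else Finset.univ.filter (fun j => a j < i) := by
    intro i
    split_ifs with hc
    · ext j
      simp only [Finset.mem_insert, Finset.mem_filter, Finset.mem_univ, true_and]
      rcases eq_or_ne j jhat with rfl | h
      · simp [Function.update_self, hc.1]
      · simp [Function.update_of_ne h, h]
    · ext j
      simp only [Finset.mem_filter, Finset.mem_univ, true_and]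
      rcases eq_or_ne j jhat with rfl | h
      · rw [Function.update_self]
        constructor
        · intro hi; by_contra hna; exact hc ⟨hi, hna⟩
        · intro hi; exact lt_trans hgt hi
      · rw [Function.update_of_ne h]
    
  have hprodpos : ∀ i : Fin L,
      0 < ∏ j ∈ Finset.univ.filter (fun j => a j < i), p (a j) j := by
    intro i
    exact Finset.prod_pos (fun j _ => hgpos j)
  have hprodcongr : ∀ (s : Finset (Fin m)),
      ∏ j ∈ s, p (Function.update a jhat (i₀ jhat) j) j = ∏ j ∈ s, p (a j) j :=
    fun s => Finset.prod_congr rfl (fun j _ => hg j)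
  apply Finset.sum_lt_sum
  · intro i _
    rw [hset i, hprodcongr]
    split_ifs with hc
    · have hnot : jhat ∉ Finset.univ.filter (fun j => a j < i) := by
        simp [hc.2]
      rw [Finset.prod_insert hnot]
      have := hprodpos i
      have hq1 : p (a jhat) jhat ≤ 1 := hp1 _ _
      have h1 : p (a jhat) jhat * (∏ j ∈ Finset.univ.filter (fun j => a j < i), p (a j) j)
          ≤ ∏ j ∈ Finset.univ.filter (fun j => a j < i), p (a j) j :=
        mul_le_of_le_one_left this.le hq1
      exact mul_le_mul_of_nonneg_left h1 (hpos i).le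
    · rfl
  · refine ⟨a jhat, Finset.mem_univ _, ?_⟩
    rw [hset (a jhat), hprodcongr]
    have hc : i₀ jhat < a jhat ∧ ¬ a jhat < a jhat := ⟨hgt, lt_irrefl _⟩
    rw [if_pos hc]
    have hnot : jhat ∉ Finset.univ.filter (fun j => a j < a jhat) := by
      simp
    rw [Finset.prod_insert hnot]
    have := hprodpos (a jhat)
    have hq1 : p (a jhat) jhat < 1 := by
      rw [hstab (a jhat) jhat (le_of_lt hgt)]; exact hplt
    have h1 : p (a jhat) jhat * (∏ j ∈ Finset.univ.filter (fun j => a j < a jhat), p (a j) j)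
        < ∏ j ∈ Finset.univ.filter (fun j => a j < a jhat), p (a j) j :=
      mul_lt_of_lt_one_left this hq1
    exact mul_lt_mul_of_pos_left h1 (hpos (a jhat))
end
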